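/- arXiv:2002.01968 — 2 statements merged into one kernel-verified Lean document; each statement's English description precedes it below -/
import Mathlib

section
/- Let k ≥ 1 and n ≥ 1 be integers and let w be a word over a k-letter alphabet Σ_k such that no length-n word has two disjoint occurrences in w. Then |w| ≤ (Σ_{x ∈ Σ_k^n} ⌈n / per(x)⌉) + n - 1, where the sum runs over all k^n words x of length n over Σ_k. -/
/-- `x` occurs in `w` at position `i`: `w[i..i+|x|-1] = x`. -/
def Occurs {α : Type*} (x w : List α) (i : ℕ) : Prop := x <+: w.drop i

/-- `w` contains two disjoint occurrences of `x`. -/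
def TwoDisjointOccs {α : Type*} (x w : List α) : Prop :=
  ∃ i j : ℕ, Occurs x w i ∧ Occurs x w j ∧ i + x.length ≤ j

/-- `w` has period `q ≥ 1`: `w[i] = w[i+q]` whenever both are defined. -/
def HasPeriod {α : Type*} (w : List α) (q : ℕ) : Prop :=
  1 ≤ q ∧ ∀ (i : ℕ) (h : i + q < w.length), w.get ⟨i, by omega⟩ = w.get ⟨i + q, h⟩

/-- The smallest period of `w`. -/
noncomputable def minPeriod {α : Type*} (w : List α) : ℕ := sInf {q | HasPeriod w q}

/-- A word is primitive if it is nonempty and not a proper power. -/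
def Primitive {α : Type*} (w : List α) : Prop :=
  w ≠ [] ∧ ∀ (x : List α) (m : ℕ), 2 ≤ m → w ≠ (List.replicate m x).flatten

/-- `x` is a border of `w`. -/
def IsBorder {α : Type*} (x w : List α) : Prop :=
  x ≠ [] ∧ x ≠ w ∧ x <+: w ∧ x <:+ w

def Unbordered {α : Type*} (w : List α) : Prop := ∀ x, ¬ IsBorder x w

/-- An overlap: a word of the form `a x a x a`. -/
def IsOverlap {α : Type*} (u : List α) : Prop :=
  ∃ (a : α) (x : List α), u = [a] ++ x ++ [a] ++ x ++ [a]

/-- A `t`-overlap: a word of the form `x x x'` where `x` is nonempty of length ≥ t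
and `x'` is the prefix of `x` of length `t`. -/
def IsTOverlap {α : Type*} (t : ℕ) (u : List α) : Prop :=
  ∃ x : List α, x ≠ [] ∧ t ≤ x.length ∧ u = x ++ x ++ x.take t

/-- `w` contains a split occurrence of a `t`-overlap: a factor `x y z` with `x z` a `t`-overlap. -/
def HasSplitTOverlap {α : Type*} (t : ℕ) (w : List α) : Prop :=
  ∃ x y z : List α, (x ++ y ++ z) <:+: w ∧ IsTOverlap t (x ++ z)

/-- `w` contains a reversed split occurrence of a `t`-overlap:
a factor `x y z` with `z x` a `t`-overlap. -/
def HasRevSplitTOverlap {α : Type*} (t : ℕ) (w : List α) : Prop :=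
  ∃ x y z : List α, (x ++ y ++ z) <:+: w ∧ IsTOverlap t (z ++ x)

/-!
Each of the `|w| - n + 1` positions `i ≤ |w| - n` starts an occurrence of some word `x` of
length `n`. If `x` occurs at `i < j`, then `j - i` is a period of `x`, so `j - i ≥ per(x)`, while
the hypothesis forces `j < i + n`. The occurrences of `x` thus lie in a window of length `n` and
are `per(x)` apart, so there are at most `⌈n / per(x)⌉` of them; summing over `x` gives the bound.
-/

section Periods

variable {α : Type*}

theorem hasPeriod_length_add_one (x : List α) : HasPeriod x (x.length + 1) :=
  ⟨by omega, fun i hi => absurd hi (by omega)⟩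

theorem hasPeriod_minPeriod (x : List α) : HasPeriod x (minPeriod x) :=
  Nat.sInf_mem (s := {q | HasPeriod x q}) ⟨_, hasPeriod_length_add_one x⟩

theorem minPeriod_pos (x : List α) : 0 < minPeriod x :=
  (hasPeriod_minPeriod x).1

theorem minPeriod_le {x : List α} {q : ℕ} (hq : HasPeriod x q) : minPeriod x ≤ q :=
  Nat.sInf_le (s := {q | HasPeriod x q}) hq

end Periods

theorem List.exists_ofFn_eq {α : Type*} {n : ℕ} (x : List α) (hx : x.length = n) :
    ∃ f : Fin n → α, List.ofFn f = x := by
  subst hx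
  exact ⟨x.get, List.ofFn_get x⟩

theorem Finset.card_le_of_separated_of_lt_add {s : Finset ℕ} {p n : ℕ} (hp : 0 < p)
    (hsep : ∀ i ∈ s, ∀ j ∈ s, i < j → i + p ≤ j) (hspan : ∀ i ∈ s, ∀ j ∈ s, j < i + n) :
    s.card ≤ (n + p - 1) / p := by
  rcases s.eq_empty_or_nonempty with rfl | hne
  · simp
  set m := s.min' hne
  have hm : m ∈ s := s.min'_mem hne
  have hn : 0 < n := by have hmm : m < m + n := hspan m hm m hm; omega
  calc s.card ≤ (Finset.range ((n + p - 1) / p)).card := by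
        refine Finset.card_le_card_of_injOn (fun i => (i - m) / p) (fun i hi => ?_) ?_
        · have hi_lt : i < m + n := hspan m hm i hi
          have hceil : (n - 1) / p + 1 = (n + p - 1) / p := by
            rw [← Nat.add_div_right _ hp]; congr 1; omega
          simp only [Finset.coe_range, Set.mem_Iio]
          exact lt_of_le_of_lt (Nat.div_le_div_right (show i - m ≤ n - 1 by omega)) (by omega)
        · intro i hi j hj hij
          by_contra hne
          wlog hlt : i < j generalizing i j
          · exact this hj hi hij.symm (Ne.symm hne) (by omega)
          have hgap : i + p ≤ j := hsep i hi j hj hlt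
          have hmi : m ≤ i := s.min'_le i hi
          have hquot : (i - m) / p + 1 ≤ (j - m) / p := by
            rw [← Nat.add_div_right _ hp]
            exact Nat.div_le_div_right (by omega)
          simp only at hij
          omega
    _ = (n + p - 1) / p := Finset.card_range _

section Occurrences

variable {α : Type*}

theorem Occurs.add_lt_length {x w : List α} {i t : ℕ} (h : Occurs x w i) (ht : t < x.length) :
    i + t < w.length := by
  have hlen := h.length_le
  rw [List.length_drop] at hlen
  omega

theorem Occurs.getElem_eq {x w : List α} {i t : ℕ} (h : Occurs x w i) (ht : t < x.length) :
    x[t] = w[i + t]'(h.add_lt_length ht) := by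
  rw [h.getElem ht, List.getElem_drop]

theorem occurs_drop_take (w : List α) (i n : ℕ) : Occurs ((w.drop i).take n) w i :=
  List.take_prefix _ _

theorem Occurs.hasPeriod_sub {x w : List α} {i j : ℕ} (hi : Occurs x w i) (hj : Occurs x w j)
    (hij : i < j) : HasPeriod x (j - i) := by
  refine ⟨by omega, fun t ht => ?_⟩
  simp only [List.get_eq_getElem]
  rw [hj.getElem_eq, hi.getElem_eq]
  congr 1
  omega

variable [DecidableEq α]

instance (x w : List α) (i : ℕ) : Decidable (Occurs x w i) :=
  inferInstanceAs (Decidable (x <+: w.drop i))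

-- `Occurs [] w i` holds for every `i`, hence the cut-off at `w.length`.
def occurrences (x w : List α) : Finset ℕ :=
  (Finset.range (w.length + 1)).filter (Occurs x w)

theorem card_occurrences_le {x w : List α} (h : ¬ TwoDisjointOccs x w) :
    (occurrences x w).card ≤ (x.length + minPeriod x - 1) / minPeriod x := by
  refine Finset.card_le_of_separated_of_lt_add (minPeriod_pos x) (fun i hi j hj hij => ?_)
    (fun i hi j hj => ?_)
  all_goals simp only [occurrences, Finset.mem_filter] at hi hj
  · have hper : minPeriod x ≤ j - i := minPeriod_le (hi.2.hasPeriod_sub hj.2 hij)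
    omega
  · by_contra hle
    exact h ⟨i, j, hi.2, hj.2, by omega⟩

theorem length_add_one_sub_le_sum_card_occurrences [Fintype α] (w : List α) (n : ℕ) :
    w.length + 1 - n ≤ ∑ f : Fin n → α, (occurrences (List.ofFn f) w).card := by
  have hcover : Finset.range (w.length + 1 - n) ⊆
      Finset.univ.biUnion fun f : Fin n → α => occurrences (List.ofFn f) w := by
    intro i hi
    rw [Finset.mem_range] at hi
    obtain ⟨f, hf⟩ := ((w.drop i).take n).exists_ofFn_eq (n := n)
      (by rw [List.length_take, List.length_drop]; omega)
    simp only [Finset.mem_biUnion, Finset.mem_univ, true_and, occurrences, Finset.mem_filter,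
      Finset.mem_range]
    exact ⟨f, by omega, hf ▸ occurs_drop_take w i n⟩
  calc w.length + 1 - n = (Finset.range (w.length + 1 - n)).card := (Finset.card_range _).symm
    _ ≤ _ := (Finset.card_le_card hcover).trans Finset.card_biUnion_le

end Occurrences

theorem length_bound_of_no_disjoint_occurrences_general (k n : ℕ)
    (w : List (Fin k))
    (h : ∀ x : List (Fin k), x.length = n → ¬ TwoDisjointOccs x w) :
    w.length ≤
      (∑ f : Fin n → Fin k,
        (n + minPeriod (List.ofFn f) - 1) / minPeriod (List.ofFn f)) + n - 1 := by
  have hcount := length_add_one_sub_le_sum_card_occurrences w n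
  have hbound : ∑ f : Fin n → Fin k, (occurrences (List.ofFn f) w).card ≤
      ∑ f : Fin n → Fin k, (n + minPeriod (List.ofFn f) - 1) / minPeriod (List.ofFn f) :=
    Finset.sum_le_sum fun f _ => by
      simpa using card_occurrences_le (h (List.ofFn f) (List.length_ofFn))
  omega

theorem length_bound_of_no_disjoint_occurrences (k n : ℕ) (hk : 1 ≤ k) (hn : 1 ≤ n)
    (w : List (Fin k))
    (h : ∀ x : List (Fin k), x.length = n → ¬ TwoDisjointOccs x w) :
    w.length ≤
      (∑ f : Fin n → Fin k,
        (n + minPeriod (List.ofFn f) - 1) / minPeriod (List.ofFn f)) + n - 1 :=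
  length_bound_of_no_disjoint_occurrences_general k n w h
end

section
/- For every integer k ≥ 2, every word over a k-letter alphabet of length at least k^{k+1} + k contains a split occurrence of a 1-overlap; that is, S(k,1) ≤ k^{k+1} + k - 1. -/
/-!
Let `|w| ≥ k^(k+1) + k`. By pigeonhole on the `|w| - k ≥ k^(k+1)` factors of length `k + 1`,
either every word of length `k + 1` is a factor, in particular `a^(k+1)`, which contains the
overlap `aaa`, or some factor `u` occurs at two positions `i < j`. Then `w[i, j + k]` has period
`p = j - i`. If `p ≤ k`, this factor has length `> 2p` and so begins with an overlap. Otherwise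
the two occurrences of `u` are disjoint; as `u` has `k + 1` letters from a `k`-letter alphabet, it
has a factor `a v a`, and `a v` in the first occurrence together with `a v a` in the second
form a split overlap.
-/

section

variable {α : Type*}

lemma hasSplitTOverlap_of_infix {t : ℕ} {x y w : List α} (hx : x ≠ []) (ht : t ≤ x.length)
    (h : x ++ y ++ (x ++ x.take t) <:+: w) : HasSplitTOverlap t w :=
  ⟨x, y, x ++ x.take t, h, x, hx, ht, by simp⟩

lemma List.exists_eq_append_cons_append_cons_of_not_nodup {l : List α} (h : ¬ l.Nodup) :
    ∃ a l₁ l₂ l₃, l = l₁ ++ a :: l₂ ++ a :: l₃ := by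
  induction l with
  | nil => exact absurd List.nodup_nil h
  | cons b l ih =>
    by_cases hb : b ∈ l
    · obtain ⟨s, t, rfl⟩ := List.append_of_mem hb
      exact ⟨b, [], s, t, by simp⟩
    · obtain ⟨a, l₁, l₂, l₃, rfl⟩ := ih fun hl => h (List.nodup_cons.2 ⟨hb, hl⟩)
      exact ⟨a, b :: l₁, l₂, l₃, by simp⟩

lemma hasSplitTOverlap_one_of_not_nodup {u y w : List α} (hu : ¬ u.Nodup)
    (h : u ++ y ++ u <:+: w) : HasSplitTOverlap 1 w := by
  obtain ⟨a, l₁, l₂, l₃, rfl⟩ := List.exists_eq_append_cons_append_cons_of_not_nodup hu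
  refine hasSplitTOverlap_of_infix (x := a :: l₂) (y := a :: l₃ ++ y ++ l₁)
    (List.cons_ne_nil _ _) (by simp) (List.IsInfix.trans ⟨l₁, l₃, ?_⟩ h)
  simp

/-- `u <+: s ++ u` says that `u` has period `|s|`. -/
lemma append_take_prefix_of_prefix_append {s u : List α} {t : ℕ} (ht : t ≤ s.length)
    (hlen : s.length + t ≤ u.length) (h : u <+: s ++ u) : s ++ s.take t <+: u := by
  have hu : u = s ++ u.take (u.length - s.length) := by
    have := List.prefix_iff_eq_take.1 h
    rwa [List.take_append, List.take_of_length_le (by omega)] at this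
  have hst : s.take t = u.take t := by
    rw [hu, List.take_append_of_le_length ht]
  rw [hst, hu, List.prefix_append_right_inj, ← hu]
  exact List.take_prefix_take_left (by omega)

lemma hasSplitTOverlap_one_of_prefix_append {s u w : List α} (hs : s ≠ []) (hu : ¬ u.Nodup)
    (hpre : u <+: s ++ u) (h : s ++ u <:+: w) : HasSplitTOverlap 1 w := by
  rcases lt_or_ge s.length u.length with hlt | hge
  · have hs₁ : 1 ≤ s.length := List.length_pos_iff.2 hs
    have hper := append_take_prefix_of_prefix_append hs₁ hlt hpre
    refine hasSplitTOverlap_of_infix (y := []) hs hs₁ (List.IsInfix.trans ?_ h)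
    simpa using ((List.prefix_append_right_inj s).2 hper).isInfix
  · obtain ⟨y, rfl⟩ : u <+: s :=
      List.prefix_of_prefix_length_le hpre (List.prefix_append s u) hge
    exact hasSplitTOverlap_one_of_not_nodup hu (by simpa using h)

lemma exists_prefix_append_of_drop_take_eq {w u : List α} {i j L : ℕ} (hij : i < j)
    (hj : j ≤ w.length) (hui : (w.drop i).take L = u) (huj : (w.drop j).take L = u) :
    ∃ s, s ≠ [] ∧ u <+: s ++ u ∧ s ++ u <:+: w := by
  have hsu : (w.drop i).take (j - i) ++ u = (w.drop i).take (j - i + L) := by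
    rw [List.take_add, List.drop_drop, Nat.add_sub_cancel' hij.le, huj]
  refine ⟨(w.drop i).take (j - i), ?_, ?_, ?_⟩
  · rw [← List.length_pos_iff]
    simp only [List.length_take, List.length_drop]
    omega
  · rw [hsu, ← hui]
    exact List.take_prefix_take_left (by omega)
  · rw [hsu]
    exact (List.take_prefix _ _).isInfix.trans (List.drop_suffix i w).isInfix

lemma exists_drop_take_eq_or_forall_infix [Fintype α] {w : List α} {L : ℕ}
    (hw : Fintype.card α ^ L + L ≤ w.length + 1) :
    (∃ i j, i < j ∧ j + L ≤ w.length ∧ (w.drop i).take L = (w.drop j).take L) ∨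
      ∀ v : List α, v.length = L → v <:+: w := by
  let factor (i : Fin (w.length + 1 - L)) : List.Vector α L :=
    ⟨(w.drop i).take L, by simp only [List.length_take, List.length_drop]; omega⟩
  by_cases hinj : factor.Injective
  · right
    intro v hv
    have hcard : Fintype.card (Fin (w.length + 1 - L)) = Fintype.card (List.Vector α L) := by
      have := Fintype.card_le_of_injective factor hinj
      simp only [Fintype.card_fin, card_vector] at this ⊢
      omega
    obtain ⟨i, hi⟩ := ((Fintype.bijective_iff_injective_and_card factor).2 ⟨hinj, hcard⟩).2 ⟨v, hv⟩
    obtain rfl : (w.drop i).take L = v := congrArg Subtype.val hi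
    exact (List.take_prefix _ _).isInfix.trans (List.drop_suffix _ w).isInfix
  · left
    obtain ⟨i, j, hfij, hne⟩ := Function.not_injective_iff.1 hinj
    have hval := congrArg Subtype.val hfij
    rcases lt_or_gt_of_ne (Fin.val_ne_of_ne hne) with hij | hji
    · exact ⟨i, j, hij, by omega, hval⟩
    · exact ⟨j, i, hji, by omega, hval.symm⟩

lemma hasSplitTOverlap_one_of_replicate_infix {n : ℕ} {a : α} {w : List α} (hn : 3 ≤ n)
    (h : List.replicate n a <:+: w) : HasSplitTOverlap 1 w := by
  obtain ⟨m, rfl⟩ := Nat.exists_eq_add_of_le hn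
  refine hasSplitTOverlap_of_infix (x := [a]) (y := []) (List.cons_ne_nil _ _) le_rfl
    (List.IsInfix.trans ⟨[], List.replicate m a, ?_⟩ h)
  rw [List.replicate_add]
  rfl

end

theorem S_k_one_bound (k : ℕ) (hk : 2 ≤ k) :
    ∀ w : List (Fin k), k ^ (k + 1) + k ≤ w.length → HasSplitTOverlap 1 w := by
  intro w hw
  have hcard : Fintype.card (Fin k) ^ (k + 1) + (k + 1) ≤ w.length + 1 := by
    rw [Fintype.card_fin]
    omega
  rcases exists_drop_take_eq_or_forall_infix hcard with ⟨i, j, hij, hj, heq⟩ | hall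
  · obtain ⟨s, hs, hpre, hinf⟩ := exists_prefix_append_of_drop_take_eq hij (by omega) heq rfl
    have hlen : ((w.drop j).take (k + 1)).length = k + 1 := by
      simp only [List.length_take, List.length_drop]
      omega
    refine hasSplitTOverlap_one_of_prefix_append hs (fun hnd => ?_) hpre hinf
    have := hnd.length_le_card
    rw [hlen, Fintype.card_fin] at this
    omega
  · exact hasSplitTOverlap_one_of_replicate_infix (a := (⟨0, by omega⟩ : Fin k)) (by omega)
      (hall _ List.length_replicate)
end
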